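/- arXiv:1310.5011 — 5 statements merged into one kernel-verified Lean document; each statement's English description precedes it below -/
import Mathlib

section
/- There exists a meadow M of characteristic 0 that is not a cancellation meadow and does not contain the zero-totalized field of rational numbers as a subalgebra; concretely, there exists a meadow M of characteristic 0 containing an element a such that a ≠ 0, 2 ≠ 0 and 2·a = 0 hold in M (so M has proper zero divisors), and moreover 2·2⁻¹ ≠ 1 holds in M. -/
/-!
A product of meadows is a meadow, so `ℚ × 𝔽₂` is one. It has characteristic zero because its
first factor does, while `a = (0, 1)` is a nonzero element killed by `2`. A zero divisor is never
a unit, so `2 * 2⁻¹ ≠ 1`, and `2` itself violates the inverse law.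
-/

class Meadow (M : Type) extends CommRing M, Inv M where
  minv_inv : ∀ x : M, x⁻¹⁻¹ = x
  ril : ∀ x : M, x * (x * x⁻¹) = x

instance Field.toMeadow (K : Type) [Field K] : Meadow K where
  minv_inv := inv_inv
  ril x := by
    rcases eq_or_ne x 0 with rfl | hx
    · simp
    · rw [mul_inv_cancel₀ hx, mul_one]

instance Prod.instMeadow (M N : Type) [Meadow M] [Meadow N] : Meadow (M × N) where
  minv_inv x := Prod.ext (Meadow.minv_inv x.1) (Meadow.minv_inv x.2)
  ril x := Prod.ext (Meadow.ril x.1) (Meadow.ril x.2)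

theorem mul_ne_one_of_mul_eq_zero {R : Type} [CommMonoidWithZero R] {a b : R}
    (ha : a ≠ 0) (hba : b * a = 0) (c : R) : b * c ≠ 1 := fun hbc =>
  ha ((IsUnit.of_mul_eq_one c hbc).mul_right_eq_zero.mp hba)

/-- there is a meadow of characteristic 0 (all numerals `n ≥ 1` are nonzero)
that is not a cancellation meadow, witnessed by an element `a ≠ 0` with `2 ≠ 0` and
`2 * a = 0`, and in which moreover `2 * 2⁻¹ ≠ 1` (so it does not contain `ℚ₀`). -/
theorem exists_noncancellation_meadow_char_zero :
    ∃ (M : Type) (_ : Meadow M),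
      (∀ n : ℕ, 0 < n → (n : M) ≠ 0) ∧
      ¬ (∀ x : M, x ≠ 0 → x * x⁻¹ = 1) ∧
      ∃ a : M, a ≠ 0 ∧ (2 : M) ≠ 0 ∧ 2 * a = 0 ∧ (2 : M) * (2 : M)⁻¹ ≠ 1 := by
  let a : ℚ × ZMod 2 := (0, 1)
  have ha : a ≠ 0 := by simp [a, Prod.ext_iff]
  have htwo : (2 : ℚ × ZMod 2) ≠ 0 := two_ne_zero
  have htwo_a : 2 * a = 0 := by
    ext
    · simp [a]
    · exact ZMod.natCast_self 2
  have htwo_inv := mul_ne_one_of_mul_eq_zero ha htwo_a 2⁻¹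
  exact ⟨ℚ × ZMod 2, inferInstance, fun n hn => Nat.cast_ne_zero.mpr hn.ne',
    fun hIL => htwo_inv (hIL 2 htwo), a, ha, htwo, htwo_a, htwo_inv⟩
end

section
/- For each equation s = t between terms over the meadow signature Σ_m = (0,1,−,+,·,⁻¹) there exists a quantifier-free first-order formula φ(s,t) over the field signature Σ_f = (0,1,−,+,·) with the same variables such that in every cancellation meadow, under every assignment of values to the variables, s = t holds if and only if φ(s,t) holds. -/
/-- Terms over the meadow signature `Σ_m = (0,1,−,+,·,⁻¹)` with variables in `ℕ`. -/
inductive MTerm : Type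
  | var : ℕ → MTerm
  | zero : MTerm
  | one : MTerm
  | neg : MTerm → MTerm
  | add : MTerm → MTerm → MTerm
  | mul : MTerm → MTerm → MTerm
  | inv : MTerm → MTerm

def MTerm.eval {M : Type} [Zero M] [One M] [Neg M] [Add M] [Mul M] [Inv M]
    (ρ : ℕ → M) : MTerm → M
  | .var v => ρ v
  | .zero => 0
  | .one => 1
  | .neg t => -(t.eval ρ)
  | .add s t => s.eval ρ + t.eval ρ
  | .mul s t => s.eval ρ * t.eval ρ
  | .inv t => (t.eval ρ)⁻¹

def MTerm.vars : MTerm → Set ℕ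
  | .var v => {v}
  | .zero => ∅
  | .one => ∅
  | .neg t => t.vars
  | .add s t => s.vars ∪ t.vars
  | .mul s t => s.vars ∪ t.vars
  | .inv t => t.vars

/-- Terms over the field signature `Σ_f = (0,1,−,+,·)`. -/
inductive FTerm : Type
  | var : ℕ → FTerm
  | zero : FTerm
  | one : FTerm
  | neg : FTerm → FTerm
  | add : FTerm → FTerm → FTerm
  | mul : FTerm → FTerm → FTerm

def FTerm.eval {M : Type} [Zero M] [One M] [Neg M] [Add M] [Mul M]
    (ρ : ℕ → M) : FTerm → M
  | .var v => ρ v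
  | .zero => 0
  | .one => 1
  | .neg t => -(t.eval ρ)
  | .add s t => s.eval ρ + t.eval ρ
  | .mul s t => s.eval ρ * t.eval ρ

def FTerm.vars : FTerm → Set ℕ
  | .var v => {v}
  | .zero => ∅
  | .one => ∅
  | .neg t => t.vars
  | .add s t => s.vars ∪ t.vars
  | .mul s t => s.vars ∪ t.vars

/-- Quantifier-free first-order formulas over the field signature `Σ_f`. -/
inductive QFForm : Type
  | eq : FTerm → FTerm → QFForm
  | not : QFForm → QFForm
  | and : QFForm → QFForm → QFForm
  | or : QFForm → QFForm → QFForm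
  | imp : QFForm → QFForm → QFForm

def QFForm.holds {M : Type} [Zero M] [One M] [Neg M] [Add M] [Mul M]
    (ρ : ℕ → M) : QFForm → Prop
  | .eq s t => s.eval ρ = t.eval ρ
  | .not φ => ¬ φ.holds ρ
  | .and φ ψ => φ.holds ρ ∧ ψ.holds ρ
  | .or φ ψ => φ.holds ρ ∨ ψ.holds ρ
  | .imp φ ψ => φ.holds ρ → ψ.holds ρ

def QFForm.vars : QFForm → Set ℕ
  | .eq s t => s.vars ∪ t.vars
  | .not φ => φ.vars
  | .and φ ψ => φ.vars ∪ ψ.vars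
  | .or φ ψ => φ.vars ∪ ψ.vars
  | .imp φ ψ => φ.vars ∪ ψ.vars

/-!
In a cancellation meadow, every term can be written as a field fraction `n · d⁻¹`
with `d` invertible once one knows, for each inverted subterm, whether its numerator
vanishes: `(n · d⁻¹)⁻¹` is `0` if `n = 0` and `d · n⁻¹` otherwise. Splitting on these
finitely many conditions inside the formula, `s = t` becomes the field equation
`n · d' = n' · d` between the fractions `n/d` of `s` and `n'/d'` of `t`.
-/

namespace Meadow

variable {M : Type} [Meadow M]

theorem inv_eq_of_mul_eq_one {x y : M} (h : x * y = 1) : x⁻¹ = y := by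
  have hx : x * x⁻¹ = 1 := by
    calc x * x⁻¹ = x * x⁻¹ * (x * y) := by rw [h, mul_one]
      _ = x * (x * x⁻¹) * y := by ring
      _ = 1 := by rw [ril, h]
  calc x⁻¹ = x⁻¹ * (x * y) := by rw [h, mul_one]
    _ = x * x⁻¹ * y := by ring
    _ = y := by rw [hx, one_mul]

theorem inv_zero : (0 : M)⁻¹ = 0 := by
  calc (0 : M)⁻¹ = 0⁻¹ * (0⁻¹ * 0⁻¹⁻¹) := (ril _).symm
    _ = 0 := by rw [minv_inv]; ring

theorem inv_one : (1 : M)⁻¹ = 1 :=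
  inv_eq_of_mul_eq_one (mul_one 1)

theorem mul_inv_cancel_of_isUnit {a : M} (ha : IsUnit a) : a * a⁻¹ = 1 := by
  obtain ⟨b, hb⟩ := ha.exists_right_inv
  rw [inv_eq_of_mul_eq_one hb, hb]

theorem mul_inv_of_isUnit {a b : M} (ha : IsUnit a) (hb : IsUnit b) :
    (a * b)⁻¹ = a⁻¹ * b⁻¹ :=
  inv_eq_of_mul_eq_one <| by
    linear_combination (b * b⁻¹) * mul_inv_cancel_of_isUnit ha + mul_inv_cancel_of_isUnit hb

theorem mul_inv_add_mul_inv {a b : M} (ha : IsUnit a) (hb : IsUnit b) (x y : M) :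
    x * a⁻¹ + y * b⁻¹ = (x * b + y * a) * (a * b)⁻¹ := by
  rw [mul_inv_of_isUnit ha hb]
  linear_combination (-(x * a⁻¹)) * mul_inv_cancel_of_isUnit hb -
    y * b⁻¹ * mul_inv_cancel_of_isUnit ha

theorem mul_inv_mul_mul_inv {a b : M} (ha : IsUnit a) (hb : IsUnit b) (x y : M) :
    x * a⁻¹ * (y * b⁻¹) = x * y * (a * b)⁻¹ := by
  rw [mul_inv_of_isUnit ha hb]; ring

theorem inv_mul_inv {a x : M} (ha : IsUnit a) (hx : IsUnit x) : (x * a⁻¹)⁻¹ = a * x⁻¹ :=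
  inv_eq_of_mul_eq_one <| by
    linear_combination (a * a⁻¹) * mul_inv_cancel_of_isUnit hx + mul_inv_cancel_of_isUnit ha

theorem mul_inv_eq_mul_inv_iff {a b : M} (ha : IsUnit a) (hb : IsUnit b) (x y : M) :
    x * a⁻¹ = y * b⁻¹ ↔ x * b = y * a := by
  have ha' := mul_inv_cancel_of_isUnit ha
  have hb' := mul_inv_cancel_of_isUnit hb
  constructor
  · intro h; linear_combination (a * b) * h - x * b * ha' + y * a * hb'
  · intro h; linear_combination (a⁻¹ * b⁻¹) * h - x * a⁻¹ * hb' + y * b⁻¹ * ha'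

end Meadow

namespace MTerm

/-- `u.asFraction k` is the formula `k n d` for a field fraction `n/d` of `u`, where the
inverse of a fraction `n/d` is `0/1` under the guard `n = 0` and `d/n` under `n ≠ 0`. -/
def asFraction : MTerm → (FTerm → FTerm → QFForm) → QFForm
  | .var v, k => k (.var v) .one
  | .zero, k => k .zero .one
  | .one, k => k .one .one
  | .neg u, k => u.asFraction fun n d => k (.neg n) d
  | .add u v, k => u.asFraction fun n d => v.asFraction fun n' d' =>
      k (.add (.mul n d') (.mul n' d)) (.mul d d')
  | .mul u v, k => u.asFraction fun n d => v.asFraction fun n' d' =>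
      k (.mul n n') (.mul d d')
  | .inv u, k => u.asFraction fun n d =>
      .or (.and (.eq n .zero) (k .zero .one)) (.and (.not (.eq n .zero)) (k d n))

theorem vars_asFraction (u : MTerm) (V : Set ℕ) (k : FTerm → FTerm → QFForm)
    (hk : ∀ n d, (k n d).vars = n.vars ∪ d.vars ∪ V) :
    (u.asFraction k).vars = u.vars ∪ V := by
  induction u generalizing V k with
  | var | zero | one => simp [asFraction, hk, vars, FTerm.vars]
  | neg u ih =>
    rw [asFraction, ih V _ fun n d => by rw [hk]; rfl, vars]
  | add u v ihu ihv | mul u v ihu ihv =>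
    rw [asFraction, ihu (v.vars ∪ V), vars, Set.union_assoc]
    intro n d
    rw [ihv (n.vars ∪ d.vars ∪ V)]
    · ext; simp only [Set.mem_union]; tauto
    intro n' d'
    rw [hk]
    ext; simp only [FTerm.vars, Set.mem_union]; tauto
  | inv u ih =>
    rw [asFraction, ih V, vars]
    intro n d
    simp only [QFForm.vars, FTerm.vars, hk]
    ext; simp only [Set.mem_union, Set.union_empty, Set.empty_union]; tauto

theorem holds_asFraction {M : Type} [Meadow M] (hIL : ∀ x : M, x ≠ 0 → x * x⁻¹ = 1)
    (ρ : ℕ → M) (u : MTerm) (P : M → Prop) (k : FTerm → FTerm → QFForm)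
    (hk : ∀ n d, IsUnit (d.eval ρ) → ((k n d).holds ρ ↔ P (n.eval ρ * (d.eval ρ)⁻¹))) :
    (u.asFraction k).holds ρ ↔ P (u.eval ρ) := by
  induction u generalizing P k with
  | var | zero | one =>
    rw [asFraction, hk _ _ isUnit_one]
    simp only [FTerm.eval, eval, Meadow.inv_one, mul_one]
  | neg u ih =>
    exact ih (fun a => P (-a)) _ fun n d hd => by
      rw [hk _ _ hd]; simp only [FTerm.eval, neg_mul]
  | add u v ihu ihv =>
    exact ihu (fun a => P (a + v.eval ρ)) _ fun n d hd =>
      ihv (fun b => P (n.eval ρ * (d.eval ρ)⁻¹ + b)) _ fun n' d' hd' => by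
        rw [hk _ (.mul d d') (hd.mul hd'), Meadow.mul_inv_add_mul_inv hd hd']; rfl
  | mul u v ihu ihv =>
    exact ihu (fun a => P (a * v.eval ρ)) _ fun n d hd =>
      ihv (fun b => P (n.eval ρ * (d.eval ρ)⁻¹ * b)) _ fun n' d' hd' => by
        rw [hk _ (.mul d d') (hd.mul hd'), Meadow.mul_inv_mul_mul_inv hd hd']; rfl
  | inv u ih =>
    refine ih (fun a => P a⁻¹) _ fun n d hd => ?_
    by_cases hn : n.eval ρ = 0
    · simp only [QFForm.holds, FTerm.eval, hn, not_true_eq_false, false_and, or_false, true_and]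
      rw [hk _ _ isUnit_one]
      simp only [FTerm.eval, zero_mul, Meadow.inv_zero]
    · simp only [QFForm.holds, FTerm.eval, hn, not_false_eq_true, false_and, false_or,
        true_and]
      have hn' : IsUnit (n.eval ρ) := IsUnit.of_mul_eq_one _ (hIL _ hn)
      rw [hk _ _ hn', Meadow.inv_mul_inv hd hn']

def eqForm (s t : MTerm) : QFForm :=
  s.asFraction fun n d => t.asFraction fun n' d' => .eq (.mul n d') (.mul n' d)

theorem vars_eqForm (s t : MTerm) : (s.eqForm t).vars = s.vars ∪ t.vars := by
  rw [eqForm, vars_asFraction s t.vars]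
  intro n d
  rw [vars_asFraction t (n.vars ∪ d.vars), Set.union_comm]
  intro n' d'
  ext; simp only [QFForm.vars, FTerm.vars, Set.mem_union]; tauto

theorem holds_eqForm {M : Type} [Meadow M] (hIL : ∀ x : M, x ≠ 0 → x * x⁻¹ = 1)
    (ρ : ℕ → M) (s t : MTerm) : (s.eqForm t).holds ρ ↔ s.eval ρ = t.eval ρ :=
  holds_asFraction hIL ρ s (· = t.eval ρ) _ fun n d hd =>
    holds_asFraction hIL ρ t (n.eval ρ * (d.eval ρ)⁻¹ = ·) _ fun _ _ hd' =>
      (Meadow.mul_inv_eq_mul_inv_iff hd hd' _ _).symm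

end MTerm

/-- every meadow equation `s = t` has a quantifier-free first-order
representation `φ(s,t)` over the field signature, with the same variables, valid in
every cancellation meadow under every assignment. -/
theorem meadow_equation_has_qf_field_representation (s t : MTerm) :
    ∃ φ : QFForm, φ.vars = s.vars ∪ t.vars ∧
      ∀ (M : Type) [Meadow M], (∀ x : M, x ≠ 0 → x * x⁻¹ = 1) →
        ∀ ρ : ℕ → M, (s.eval ρ = t.eval ρ ↔ φ.holds ρ) :=
  ⟨s.eqForm t, s.vars_eqForm t, fun _ _ hIL ρ => (MTerm.holds_eqForm hIL ρ s t).symm⟩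
end

section
/- An equation s = t between terms over the meadow signature Σ_m = (0,1,−,+,·,⁻¹) holds in every meadow of characteristic 0 if and only if it holds in every cancellation meadow of characteristic 0. -/
/-- The Inverse Law `IL`: a cancellation meadow is a meadow satisfying it. -/
def InverseLaw (M : Type) [Meadow M] : Prop :=
  ∀ x : M, x ≠ 0 → x * x⁻¹ = 1

/-- A meadow has characteristic 0 if `n · n⁻¹ = 1` for every positive integer `n`. -/
def MeadowChar0 (M : Type) [Meadow M] : Prop :=
  ∀ n : ℕ, 0 < n → (n : M) * (n : M)⁻¹ = 1

/-!
A meadow is a reduced ring (`x² = 0` gives `x = x·(x·x⁻¹) = 0`), so a nonzero value `s - t`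
survives in some quotient by a prime ideal, hence under some ring homomorphism `φ` into a field.
Such a `φ` automatically respects the inverse: ideals of a meadow are closed under `⁻¹`, because
`x⁻¹ = x⁻¹ · (x⁻¹ · x)`, and where `φ x ≠ 0` the restricted inverse law cancels to
`φ x · φ x⁻¹ = 1`. The field, with `0⁻¹ = 0`, is a cancellation meadow of characteristic 0
in which `s` and `t` still differ.
-/

lemma exists_ringHom_field_apply_ne_zero {R : Type} [CommRing R] [IsReduced R] {a : R}
    (ha : a ≠ 0) : ∃ (K : Type) (_ : Field K) (φ : R →+* K), φ a ≠ 0 := by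
  have ha' : a ∉ nilradical R := by simpa [nilradical_eq_zero] using ha
  rw [nilradical_eq_sInf, Submodule.mem_sInf] at ha'
  obtain ⟨P, hP : Ideal.IsPrime P, haP⟩ := not_forall₂.1 ha'
  refine ⟨FractionRing (R ⧸ P), inferInstance,
    (algebraMap (R ⧸ P) (FractionRing (R ⧸ P))).comp (Ideal.Quotient.mk P), ?_⟩
  rwa [RingHom.comp_apply, ne_eq, IsFractionRing.to_map_eq_zero_iff,
    Ideal.Quotient.eq_zero_iff_mem]

abbrev Field.toMeadow_s2 (K : Type) [Field K] : Meadow K where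
  minv_inv := inv_inv
  ril x := by
    rcases eq_or_ne x 0 with rfl | hx
    · simp
    · rw [mul_inv_cancel₀ hx, mul_one]

lemma Field.inverseLaw (K : Type) [Field K] : @InverseLaw K (Field.toMeadow_s2 K) :=
  fun _ => mul_inv_cancel₀

namespace Meadow

variable {M : Type} [Meadow M]

lemma eq_zero_of_sq_eq_zero {x : M} (h : x ^ 2 = 0) : x = 0 := by
  rw [← ril x, ← mul_assoc, ← sq, h, zero_mul]

instance : IsReduced M :=
  (isReduced_iff_pow_one_lt 2 one_lt_two).2 fun _ => eq_zero_of_sq_eq_zero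

lemma inv_mul_inv_mul_self (x : M) : x⁻¹ * (x⁻¹ * x) = x⁻¹ := by
  simpa only [minv_inv] using ril x⁻¹

lemma inv_mem {I : Ideal M} {x : M} (hx : x ∈ I) : x⁻¹ ∈ I := by
  rw [← inv_mul_inv_mul_self x]
  exact I.mul_mem_left _ (I.mul_mem_left _ hx)

lemma map_inv {K : Type} [Field K] (φ : M →+* K) (x : M) : φ x⁻¹ = (φ x)⁻¹ := by
  rcases eq_or_ne (φ x) 0 with hx | hx
  · rw [hx, inv_zero, ← RingHom.mem_ker]
    exact inv_mem (RingHom.mem_ker.2 hx)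
  · have hril : φ x * (φ x * φ x⁻¹) = φ x * 1 := by
      rw [← map_mul, ← map_mul, ril, mul_one]
    exact eq_inv_of_mul_eq_one_right (mul_left_cancel₀ hx hril)

end Meadow

lemma MeadowChar0.map {M N : Type} [Meadow M] [Meadow N] {φ : M →+* N}
    (hφ : ∀ x, φ x⁻¹ = (φ x)⁻¹) (hM : MeadowChar0 M) : MeadowChar0 N := fun n hn => by
  rw [← map_natCast φ n, ← hφ, ← map_mul, hM n hn, map_one]

lemma MTerm.eval_map {M N : Type} [Meadow M] [Meadow N] {φ : M →+* N}
    (hφ : ∀ x, φ x⁻¹ = (φ x)⁻¹) (ρ : ℕ → M) (u : MTerm) :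
    φ (u.eval ρ) = u.eval (φ ∘ ρ) := by
  induction u with
  | var v => rfl
  | zero => exact map_zero φ
  | one => exact map_one φ
  | neg t iht => simp only [MTerm.eval, map_neg, iht]
  | add a b iha ihb => simp only [MTerm.eval, map_add, iha, ihb]
  | mul a b iha ihb => simp only [MTerm.eval, map_mul, iha, ihb]
  | inv t iht => simp only [MTerm.eval, hφ, iht]

/-- an equation over `Σ_m` holds in every meadow of characteristic 0
iff it holds in every cancellation meadow of characteristic 0. -/
theorem meadow_char_zero_eq_iff_cancellation (s t : MTerm) :
    (∀ (M : Type) [Meadow M], MeadowChar0 M → ∀ ρ : ℕ → M, s.eval ρ = t.eval ρ) ↔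
    (∀ (M : Type) [Meadow M], MeadowChar0 M → InverseLaw M →
      ∀ ρ : ℕ → M, s.eval ρ = t.eval ρ) := by
  refine ⟨fun h M _ hM _ ρ => h M hM ρ, fun h M _ hM ρ => ?_⟩
  by_contra hne
  obtain ⟨K, _, φ, hφ⟩ := exists_ringHom_field_apply_ne_zero (sub_ne_zero.2 hne)
  let _ := Field.toMeadow_s2 K
  have hφinv : ∀ x, φ x⁻¹ = (φ x)⁻¹ := Meadow.map_inv φ
  apply hφ
  rw [map_sub, MTerm.eval_map hφinv, MTerm.eval_map hφinv, sub_eq_zero]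
  exact h K (hM.map hφinv) (Field.inverseLaw K) _
end

section
/- An equation s = t between terms over the meadow signature Σ_m = (0,1,−,+,·,⁻¹) holds in every meadow satisfying all instances of the scheme (EFR_n): 0_{x₀²+⋯+xₙ²}·x₀ = 0 if and only if it holds in every meadow satisfying all instances of the alternative scheme (AEFR_n): 1_{1+x₀²+⋯+xₙ²} = 1. In particular, a cancellation meadow satisfies all instances of EFR if and only if it satisfies all instances of AEFR. -/
/-- A meadow is formally real if it satisfies every instance of the scheme
`EFR_n`: `0_{x₀²+⋯+xₙ²} · x₀ = 0`, where `0_u = 1 - u·u⁻¹`. -/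
def FormallyReal (M : Type) [Meadow M] : Prop :=
  ∀ (n : ℕ) (x : Fin (n + 1) → M),
    (1 - (∑ i, x i ^ 2) * (∑ i, x i ^ 2)⁻¹) * x 0 = 0

/-- The alternative scheme `AEFR_n`: `1_{1+x₀²+⋯+xₙ²} = 1`, where `1_u = u·u⁻¹`. -/
def AEFR (M : Type) [Meadow M] : Prop :=
  ∀ (n : ℕ) (x : Fin (n + 1) → M),
    (1 + ∑ i, x i ^ 2) * (1 + ∑ i, x i ^ 2)⁻¹ = 1

/-!
Both schemes are equivalent in every meadow, so they axiomatise the same class.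
`EFR ⇒ AEFR` is the instance of `EFR_{n+1}` with `x₀ := 1`. For `AEFR ⇒ EFR`, put
`a = x₀`, `S = x₀² + ⋯ + xₙ²` and `R = x₁² + ⋯ + xₙ²`. Multiplying by the idempotent
`1_a` gives `1_a · S = a² · (1 + (x₁a⁻¹)² + ⋯ + (xₙa⁻¹)²)`; pseudo ones are
multiplicative, because `(xy)⁻¹ = x⁻¹y⁻¹` by uniqueness of commuting quasi-inverses,
so `AEFR` yields `1_a · 1_S = 1_a`, hence `1_S · a = 1_S · 1_a · a = a`.
-/

theorem eq_of_quasiInverse {R : Type*} [CommMonoid R] {x a b : R}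
    (hxa : x * a * x = x) (hax : a * x * a = a) (hxb : x * b * x = x) (hbx : b * x * b = b) :
    a = b := by
  have hx : a * x = b * x :=
    calc a * x = a * (x * b * x) := by rw [hxb]
      _ = b * (x * a * x) := by ac_rfl
      _ = b * x := by rw [hxa]
  calc a = a * x * a := hax.symm
    _ = b * x * a := by rw [hx]
    _ = a * x * b := by ac_rfl
    _ = b * x * b := by rw [hx]
    _ = b := hbx

namespace Meadow

variable {M : Type} [Meadow M]

theorem mul_inv_mul_self (x : M) : x * x⁻¹ * x = x := by
  rw [mul_assoc, mul_comm x⁻¹, ril]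

theorem inv_mul_inv_self (x : M) : x⁻¹ * x * x⁻¹ = x⁻¹ := by
  have h := ril x⁻¹
  rwa [minv_inv, mul_comm x⁻¹ x, ← mul_assoc] at h

theorem mul_inv (x y : M) : (x * y)⁻¹ = x⁻¹ * y⁻¹ := by
  refine eq_of_quasiInverse (x := x * y) (mul_inv_mul_self _) (inv_mul_inv_self _) ?_ ?_
  · calc x * y * (x⁻¹ * y⁻¹) * (x * y) = (x * x⁻¹ * x) * (y * y⁻¹ * y) := by ring
      _ = x * y := by rw [mul_inv_mul_self, mul_inv_mul_self]
  · calc x⁻¹ * y⁻¹ * (x * y) * (x⁻¹ * y⁻¹) = (x⁻¹ * x * x⁻¹) * (y⁻¹ * y * y⁻¹) := by ring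
      _ = x⁻¹ * y⁻¹ := by rw [inv_mul_inv_self, inv_mul_inv_self]

theorem mul_mul_inv_mul (x y : M) : x * y * (x * y)⁻¹ = x * x⁻¹ * (y * y⁻¹) := by
  rw [mul_inv]; ring

theorem mul_inv_self_idem (x : M) : x * x⁻¹ * (x * x⁻¹) = x * x⁻¹ := by
  rw [← mul_assoc, mul_inv_mul_self]

theorem mul_inv_self_of_idem {e : M} (he : e * e = e) : e * e⁻¹ = e := by
  calc e * e⁻¹ = e * e * e⁻¹ := by rw [he]
    _ = e := by rw [mul_assoc, ril]

end Meadow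

open Meadow

theorem FormallyReal.aefr {M : Type} [Meadow M] (h : FormallyReal M) : AEFR M := by
  intro n x
  have hx := h (n + 1) (Fin.cons 1 x)
  rw [Fin.sum_univ_succ] at hx
  simp only [Fin.cons_zero, Fin.cons_succ, one_pow, mul_one] at hx
  exact (sub_eq_zero.mp hx).symm

theorem AEFR.one_add_sum_sq_mul_inv {M : Type} [Meadow M] (h : AEFR M) (n : ℕ)
    (y : Fin n → M) : (1 + ∑ i, y i ^ 2) * (1 + ∑ i, y i ^ 2)⁻¹ = 1 := by
  simpa only [Fin.sum_univ_succ, Fin.cons_zero, Fin.cons_succ, zero_pow two_ne_zero, zero_add]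
    using h n (Fin.cons 0 y)

theorem AEFR.formallyReal {M : Type} [Meadow M] (h : AEFR M) : FormallyReal M := by
  intro n x
  set a := x 0
  set S := ∑ i, x i ^ 2
  set R := ∑ i : Fin n, x i.succ ^ 2
  have hU := h.one_add_sum_sq_mul_inv n (fun i => x i.succ * a⁻¹)
  simp only [mul_pow, ← Finset.sum_mul] at hU
  have hea : a * a⁻¹ * a = a := mul_inv_mul_self a
  have heS : a * a⁻¹ * S = a ^ 2 * (1 + R * a⁻¹ ^ 2) :=
    calc a * a⁻¹ * S = a * a⁻¹ * a * a + a * a⁻¹ * R := by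
          rw [show S = a ^ 2 + R from Fin.sum_univ_succ _]; ring
      _ = a ^ 2 + a * a⁻¹ * (a * a⁻¹) * R := by rw [hea, mul_inv_self_idem]; ring
      _ = a ^ 2 * (1 + R * a⁻¹ ^ 2) := by ring
  have hS : a * a⁻¹ * (S * S⁻¹) = a * a⁻¹ :=
    calc a * a⁻¹ * (S * S⁻¹) = a * a⁻¹ * S * (a * a⁻¹ * S)⁻¹ := by
          rw [mul_mul_inv_mul, mul_inv_self_of_idem (mul_inv_self_idem a)]
      _ = a * a⁻¹ := by
          rw [heS, mul_mul_inv_mul, hU, sq, mul_mul_inv_mul, mul_inv_self_idem, mul_one]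
  calc (1 - S * S⁻¹) * a = a - S * S⁻¹ * (a * a⁻¹ * a) := by rw [hea]; ring
    _ = 0 := by rw [← mul_assoc, mul_comm (S * S⁻¹), hS, hea, sub_self]

/-- an equation over `Σ_m` holds in every meadow satisfying all
instances of `EFR` iff it holds in every meadow satisfying all instances of `AEFR`;
in particular a cancellation meadow satisfies `EFR` iff it satisfies `AEFR`. -/
theorem efr_aefr_equivalent :
    (∀ s t : MTerm,
      (∀ (M : Type) [Meadow M], FormallyReal M → ∀ ρ : ℕ → M, s.eval ρ = t.eval ρ) ↔
      (∀ (M : Type) [Meadow M], AEFR M → ∀ ρ : ℕ → M, s.eval ρ = t.eval ρ)) ∧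
    (∀ (M : Type) [Meadow M], InverseLaw M → (FormallyReal M ↔ AEFR M)) :=
  ⟨fun _ _ => ⟨fun H M _ hA => H M hA.formallyReal, fun H M _ hF => H M hF.aefr⟩,
    fun _ _ _ => ⟨FormallyReal.aefr, AEFR.formallyReal⟩⟩
end

section
/- For all terms s, t over the signed field signature Σ_fs = (0,1,−,+,·,s) there exists a first-order formula ψ(s,t) over the ordered field signature (0,1,−,+,·,<) with the same free variables such that in every cancellation meadow equipped with a sign operation satisfying Signs, with the order defined by x < y ↔ s(y−x) = 1, the equation s = t holds under an assignment if and only if ψ(s,t) holds under that assignment. -/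
/-- The axioms `Signs` for a sign operation on a meadow, where `1_x = x·x⁻¹` and
`0_x = 1 - x·x⁻¹`. -/
structure IsSign (M : Type) [Meadow M] (sg : M → M) : Prop where
  s1 : ∀ x : M, sg (x * x⁻¹) = x * x⁻¹
  s2 : ∀ x : M, sg (1 - x * x⁻¹) = 1 - x * x⁻¹
  s3 : sg (-1) = -1
  s4 : ∀ x : M, sg x⁻¹ = sg x
  s5 : ∀ x y : M, sg (x * y) = sg x * sg y
  s6 : ∀ x y : M,
    (1 - (sg x - sg y) * (sg x - sg y)⁻¹) * (sg (x + y) - sg x) = 0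

/-- Terms over the signed field signature `Σ_fs = (0,1,−,+,·,s)`. -/
inductive FSTerm : Type
  | var : ℕ → FSTerm
  | zero : FSTerm
  | one : FSTerm
  | neg : FSTerm → FSTerm
  | add : FSTerm → FSTerm → FSTerm
  | mul : FSTerm → FSTerm → FSTerm
  | sgn : FSTerm → FSTerm

def FSTerm.eval {M : Type} [Zero M] [One M] [Neg M] [Add M] [Mul M]
    (sg : M → M) (ρ : ℕ → M) : FSTerm → M
  | .var v => ρ v
  | .zero => 0
  | .one => 1
  | .neg t => -(t.eval sg ρ)
  | .add s t => s.eval sg ρ + t.eval sg ρ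
  | .mul s t => s.eval sg ρ * t.eval sg ρ
  | .sgn t => sg (t.eval sg ρ)

def FSTerm.vars : FSTerm → Set ℕ
  | .var v => {v}
  | .zero => ∅
  | .one => ∅
  | .neg t => t.vars
  | .add s t => s.vars ∪ t.vars
  | .mul s t => s.vars ∪ t.vars
  | .sgn t => t.vars

/-- Terms over the ordered field signature `(0,1,−,+,·)` (the `<`-free part). -/
inductive OTerm : Type
  | var : ℕ → OTerm
  | zero : OTerm
  | one : OTerm
  | neg : OTerm → OTerm
  | add : OTerm → OTerm → OTerm
  | mul : OTerm → OTerm → OTerm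

def OTerm.eval {M : Type} [Zero M] [One M] [Neg M] [Add M] [Mul M]
    (ρ : ℕ → M) : OTerm → M
  | .var v => ρ v
  | .zero => 0
  | .one => 1
  | .neg t => -(t.eval ρ)
  | .add s t => s.eval ρ + t.eval ρ
  | .mul s t => s.eval ρ * t.eval ρ

def OTerm.vars : OTerm → Set ℕ
  | .var v => {v}
  | .zero => ∅
  | .one => ∅
  | .neg t => t.vars
  | .add s t => s.vars ∪ t.vars
  | .mul s t => s.vars ∪ t.vars

/-- First-order formulas over the ordered field signature `(0,1,−,+,·,<)`. -/
inductive OForm : Type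
  | eq : OTerm → OTerm → OForm
  | lt : OTerm → OTerm → OForm
  | not : OForm → OForm
  | and : OForm → OForm → OForm
  | or : OForm → OForm → OForm
  | imp : OForm → OForm → OForm
  | all : ℕ → OForm → OForm
  | ex : ℕ → OForm → OForm

/-- Satisfaction of an ordered-field formula in a structure with a strict order
`lt`, under an assignment `ρ`. -/
def OForm.holds {M : Type} [Zero M] [One M] [Neg M] [Add M] [Mul M]
    (lt : M → M → Prop) (ρ : ℕ → M) : OForm → Prop
  | .eq s t => s.eval ρ = t.eval ρ
  | .lt s t => lt (s.eval ρ) (t.eval ρ)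
  | .not φ => ¬ φ.holds lt ρ
  | .and φ ψ => φ.holds lt ρ ∧ ψ.holds lt ρ
  | .or φ ψ => φ.holds lt ρ ∨ ψ.holds lt ρ
  | .imp φ ψ => φ.holds lt ρ → ψ.holds lt ρ
  | .all v φ => ∀ a : M, φ.holds lt (Function.update ρ v a)
  | .ex v φ => ∃ a : M, φ.holds lt (Function.update ρ v a)

def OForm.freeVars : OForm → Set ℕ
  | .eq s t => s.vars ∪ t.vars
  | .lt s t => s.vars ∪ t.vars
  | .not φ => φ.freeVars
  | .and φ ψ => φ.freeVars ∪ ψ.freeVars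
  | .or φ ψ => φ.freeVars ∪ ψ.freeVars
  | .imp φ ψ => φ.freeVars ∪ ψ.freeVars
  | .all v φ => φ.freeVars \ {v}
  | .ex v φ => φ.freeVars \ {v}

/-! Name the value of every subterm by a fresh, existentially quantified variable, so that
only atomic equations `z = -x`, `z = x + y`, `z = x * y` remain, apart from `z = sg x`. The
latter is the disjunction of `x = 0 ∧ z = 0`, `0 < x ∧ z = 1` and `x < 0 ∧ z = -1`: by the
Inverse Law `sg x * sg x = sg (x * x⁻¹) = 1` for `x ≠ 0`, and a cancellation meadow has no
zero divisors, so `sg x = ±1`. -/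

theorem InverseLaw.noZeroDivisors {M : Type} [Meadow M] (il : InverseLaw M) :
    NoZeroDivisors M where
  eq_zero_or_eq_zero_of_mul_eq_zero {a b} hab := by
    refine or_iff_not_imp_left.2 fun ha => ?_
    calc b = a⁻¹ * (a * b) := by rw [← mul_assoc, mul_comm a⁻¹, il a ha, one_mul]
      _ = 0 := by rw [hab, mul_zero]

namespace IsSign

variable {M : Type} [Meadow M] {sg : M → M}

theorem map_zero (hs : IsSign M sg) : sg 0 = 0 := by
  simpa using hs.s1 0

theorem map_neg (hs : IsSign M sg) (x : M) : sg (-x) = -sg x := by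
  simpa [hs.s3] using hs.s5 (-1) x

theorem eq_one_or_eq_neg_one (hs : IsSign M sg) (il : InverseLaw M) {x : M} (hx : x ≠ 0) :
    sg x = 1 ∨ sg x = -1 := by
  have := il.noZeroDivisors
  refine mul_self_eq_one_iff.1 ?_
  calc sg x * sg x = sg (x * x⁻¹) := by rw [hs.s5, hs.s4]
    _ = 1 := by rw [hs.s1, il x hx]

theorem eq_iff_trichotomy (hs : IsSign M sg) (il : InverseLaw M) (x y : M) :
    y = sg x ↔ (x = 0 ∧ y = 0) ∨ (sg x = 1 ∧ y = 1) ∨ (sg (-x) = 1 ∧ y = -1) := by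
  rw [hs.map_neg, neg_eq_iff_eq_neg]
  constructor
  · rintro rfl
    by_cases hx : x = 0
    · exact Or.inl ⟨hx, hx ▸ hs.map_zero⟩
    · rcases hs.eq_one_or_eq_neg_one il hx with h | h <;> simp [h]
  · rintro (⟨rfl, rfl⟩ | ⟨h, rfl⟩ | ⟨h, rfl⟩)
    · exact hs.map_zero.symm
    · exact h.symm
    · exact h.symm

end IsSign

namespace FSTerm

def bnd : FSTerm → ℕ
  | .var v => v + 1
  | .zero => 0
  | .one => 0
  | .neg t => t.bnd
  | .add s t => max s.bnd t.bnd
  | .mul s t => max s.bnd t.bnd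
  | .sgn t => t.bnd

theorem lt_bnd_of_mem_vars {t : FSTerm} {v : ℕ} (hv : v ∈ t.vars) : v < t.bnd := by
  induction t with
  | var w => simp_all [vars, bnd]
  | zero | one => simp [vars] at hv
  | neg a ih | sgn a ih => exact ih hv
  | add a b iha ihb | mul a b iha ihb =>
    rcases hv with hv | hv
    · exact (iha hv).trans_le (le_max_left _ _)
    · exact (ihb hv).trans_le (le_max_right _ _)

theorem eval_update_of_bnd_le {M : Type} [Zero M] [One M] [Neg M] [Add M] [Mul M]
    (sg : M → M) (ρ : ℕ → M) {t : FSTerm} {n : ℕ} (hn : t.bnd ≤ n) (w : M) :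
    t.eval sg (Function.update ρ n w) = t.eval sg ρ := by
  induction t with
  | var v => exact Function.update_of_ne (by simp only [bnd] at hn; omega) _ _
  | zero | one => rfl
  | neg a ih | sgn a ih => simp only [eval, ih hn]
  | add a b iha ihb | mul a b iha ihb =>
    simp only [bnd, max_le_iff] at hn
    simp only [eval, iha hn.1, ihb hn.2]

/-- `t.varEqForm z n` says that the variable `z` holds the value of `t`; the auxiliary
variables it quantifies over are `n, n + 1, …`, fresh when `t.bnd ≤ n` and `z < n`. -/
def varEqForm : FSTerm → ℕ → ℕ → OForm
  | .var v, z, _ => .eq (.var z) (.var v)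
  | .zero, z, _ => .eq (.var z) .zero
  | .one, z, _ => .eq (.var z) .one
  | .neg a, z, n =>
      .ex n (.and (a.varEqForm n (n + 1)) (.eq (.var z) (.neg (.var n))))
  | .add a b, z, n =>
      .ex n (.ex (n + 1) (.and (a.varEqForm n (n + 2)) (.and (b.varEqForm (n + 1) (n + 2))
        (.eq (.var z) (.add (.var n) (.var (n + 1)))))))
  | .mul a b, z, n =>
      .ex n (.ex (n + 1) (.and (a.varEqForm n (n + 2)) (.and (b.varEqForm (n + 1) (n + 2))
        (.eq (.var z) (.mul (.var n) (.var (n + 1)))))))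
  | .sgn a, z, n =>
      .ex n (.and (a.varEqForm n (n + 1))
        (.or (.and (.eq (.var n) .zero) (.eq (.var z) .zero))
          (.or (.and (.lt .zero (.var n)) (.eq (.var z) .one))
               (.and (.lt (.var n) .zero) (.eq (.var z) (.neg .one))))))

theorem freeVars_varEqForm (t : FSTerm) {z n : ℕ} (ht : t.bnd ≤ n) (hz : z < n) :
    (t.varEqForm z n).freeVars = t.vars ∪ {z} := by
  induction t generalizing z n with
  | var v => simp [varEqForm, OForm.freeVars, OTerm.vars, vars, Set.union_comm]
  | zero | one => simp [varEqForm, OForm.freeVars, OTerm.vars, vars]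
  | neg a ih | sgn a ih =>
    simp only [bnd] at ht
    simp only [varEqForm, OForm.freeVars, OTerm.vars, vars,
      ih (by omega : a.bnd ≤ n + 1) (Nat.lt_succ_self n)]
    ext w
    have := @lt_bnd_of_mem_vars a w
    simp only [Set.mem_sdiff, Set.mem_union, Set.mem_singleton_iff, Set.mem_empty_iff_false]
    grind
  | add a b iha ihb | mul a b iha ihb =>
    simp only [bnd, max_le_iff] at ht
    simp only [varEqForm, OForm.freeVars, OTerm.vars, vars,
      iha (by omega : a.bnd ≤ n + 2) (by omega : n < n + 2),
      ihb (by omega : b.bnd ≤ n + 2) (by omega : n + 1 < n + 2)]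
    ext w
    have := @lt_bnd_of_mem_vars a w
    have := @lt_bnd_of_mem_vars b w
    simp only [Set.mem_sdiff, Set.mem_union, Set.mem_singleton_iff]
    grind

theorem holds_varEqForm_iff {M : Type} [Meadow M] {sg : M → M} (hs : IsSign M sg)
    (il : InverseLaw M) (t : FSTerm) {z n : ℕ} (ht : t.bnd ≤ n) (hz : z < n) (ρ : ℕ → M) :
    (t.varEqForm z n).holds (fun x y => sg (y - x) = 1) ρ ↔ ρ z = t.eval sg ρ := by
  induction t generalizing z n ρ with
  | var v | zero | one => simp [varEqForm, OForm.holds, OTerm.eval, eval]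
  | neg a ih =>
    simp only [bnd] at ht
    simp (disch := omega) only [varEqForm, OForm.holds, OTerm.eval, eval, ih,
      Function.update_self, Function.update_of_ne, eval_update_of_bnd_le, exists_eq_left]
  | sgn a ih =>
    simp only [bnd] at ht
    simp (disch := omega) only [varEqForm, OForm.holds, OTerm.eval, eval, ih,
      Function.update_self, Function.update_of_ne, eval_update_of_bnd_le, exists_eq_left]
    rw [hs.eq_iff_trichotomy il, sub_zero, zero_sub]
  | add a b iha ihb | mul a b iha ihb =>
    simp only [bnd, max_le_iff] at ht
    simp (disch := omega) only [varEqForm, OForm.holds, OTerm.eval, eval, iha, ihb,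
      Function.update_self, Function.update_of_ne, eval_update_of_bnd_le, exists_and_left,
      exists_eq_left]

def eqForm (s t : FSTerm) : OForm :=
  .ex (max s.bnd t.bnd) (.and (s.varEqForm (max s.bnd t.bnd) (max s.bnd t.bnd + 1))
    (t.varEqForm (max s.bnd t.bnd) (max s.bnd t.bnd + 1)))

theorem freeVars_eqForm (s t : FSTerm) : (s.eqForm t).freeVars = s.vars ∪ t.vars := by
  simp only [eqForm, OForm.freeVars, freeVars_varEqForm _ (by omega : s.bnd ≤ max s.bnd t.bnd + 1)
    (Nat.lt_succ_self _), freeVars_varEqForm _ (by omega : t.bnd ≤ max s.bnd t.bnd + 1)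
    (Nat.lt_succ_self _)]
  ext w
  have := @lt_bnd_of_mem_vars s w
  have := @lt_bnd_of_mem_vars t w
  simp only [Set.mem_sdiff, Set.mem_union, Set.mem_singleton_iff]
  grind

theorem holds_eqForm_iff {M : Type} [Meadow M] {sg : M → M} (hs : IsSign M sg)
    (il : InverseLaw M) (s t : FSTerm) (ρ : ℕ → M) :
    (s.eqForm t).holds (fun x y => sg (y - x) = 1) ρ ↔ s.eval sg ρ = t.eval sg ρ := by
  simp (disch := omega) only [eqForm, OForm.holds, holds_varEqForm_iff hs il,
    Function.update_self, eval_update_of_bnd_le, exists_eq_left]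

end FSTerm

/-- every equation `s = t` between `Σ_fs`-terms has a first-order
representation `ψ(s,t)` over the ordered field signature, with the same free
variables, valid in every signed cancellation meadow with the order
`x < y ↔ s(y − x) = 1`. -/
theorem fsterm_equation_has_ordered_field_representation (s t : FSTerm) :
    ∃ ψ : OForm, ψ.freeVars = s.vars ∪ t.vars ∧
      ∀ (M : Type) [Meadow M] (sg : M → M), IsSign M sg → InverseLaw M →
        ∀ ρ : ℕ → M,
          (s.eval sg ρ = t.eval sg ρ ↔
            ψ.holds (fun x y => sg (y - x) = 1) ρ) :=
  ⟨s.eqForm t, s.freeVars_eqForm t, fun _ _ _ hs il ρ => (FSTerm.holds_eqForm_iff hs il s t ρ).symm⟩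
end
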